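/- arXiv:math/0610256 — 2 statements merged into one kernel-verified Lean document; each statement's English description precedes it below -/
import Mathlib

section
/- Spatial vacuum Einstein equations for a metric with orthogonal time-axis (equation (6.4)): let g(x,t) be a smooth family of Riemannian metrics in local coordinates on U ⊆ ℝⁿ and let ĝ be the Lorentzian metric −dt² + g_{ij} dx^i dx^j on ℝ × U. Then at any point (x,t) and for given indices i, j, the spatial Ricci component of ĝ vanishes, R̂_{ij}(x,t) = 0, if and only if ∂²g_{ij}/∂t² = −2R_{ij} − (1/2) Σ_{p,q} g^{pq} (∂g_{ij}/∂t)(∂g_{pq}/∂t) + Σ_{p,q} g^{pq} (∂g_{ip}/∂t)(∂g_{jq}/∂t) at (x,t), where R_{ij} is the Ricci tensor of g(·,t). In particular, the hyperbolic geometric flow ∂²g_{ij}/∂t² = −2R_{ij} consists of the leading (second-order) terms of these vacuum Einstein equations. -/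
noncomputable section

open scoped BigOperators

/-- Partial derivative of a scalar function on `ℝⁿ` in the `i`-th coordinate direction. -/
def pd {n : ℕ} (i : Fin n) (f : (Fin n → ℝ) → ℝ) (x : Fin n → ℝ) : ℝ :=
  fderiv ℝ f x (Pi.single i 1)

/-- Christoffel symbols `Γ^k_{ij}` of a metric given in local coordinates. -/
def chris {n : ℕ} (g : (Fin n → ℝ) → Matrix (Fin n) (Fin n) ℝ) (k i j : Fin n)
    (x : Fin n → ℝ) : ℝ :=
  (1 / 2) * ∑ l, (g x)⁻¹ k l *
    (pd i (fun y => g y j l) x + pd j (fun y => g y i l) x - pd l (fun y => g y i j) x)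

/-- Curvature tensor `R^k_{ijl}`. -/
def riemUp {n : ℕ} (g : (Fin n → ℝ) → Matrix (Fin n) (Fin n) ℝ) (k i j l : Fin n)
    (x : Fin n → ℝ) : ℝ :=
  pd i (chris g k j l) x - pd j (chris g k i l) x +
    ∑ p, (chris g k i p x * chris g p j l x - chris g k j p x * chris g p i l x)

/-- Curvature tensor `R_{ijkl} = Σ_p g_{kp} R^p_{ijl}`. -/
def riem {n : ℕ} (g : (Fin n → ℝ) → Matrix (Fin n) (Fin n) ℝ) (i j k l : Fin n)
    (x : Fin n → ℝ) : ℝ :=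
  ∑ p, g x k p * riemUp g p i j l x

/-- Ricci tensor `R_{ik} = Σ_{j,l} g^{jl} R_{ijkl}`. -/
def ricci {n : ℕ} (g : (Fin n → ℝ) → Matrix (Fin n) (Fin n) ℝ) (i k : Fin n)
    (x : Fin n → ℝ) : ℝ :=
  ∑ j, ∑ l, (g x)⁻¹ j l * riem g i j k l x

/-- The product Lorentzian metric `-dt² + g_{ij}(x,t) dx^i dx^j` on `ℝ × ℝⁿ`, with
coordinates `z = (x⁰ = t, x¹, …, xⁿ)` indexed by `Fin (n+1)` (index `0` is time). -/
def lorentz {n : ℕ} (g : ℝ → (Fin n → ℝ) → Matrix (Fin n) (Fin n) ℝ) :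
    (Fin (n + 1) → ℝ) → Matrix (Fin (n + 1)) (Fin (n + 1)) ℝ :=
  fun z => Matrix.of fun α β =>
    Fin.cases (Fin.cases (-1 : ℝ) (fun _ => 0) β)
      (fun i => Fin.cases (0 : ℝ) (fun j => g (z 0) (fun m => z m.succ) i j) β) α

/-! The Christoffel symbols of `ĝ = -dt² + g` with two time indices vanish,
`Γ̂⁰_{ab} = ½ ∂ₜg_{ab}`, `Γ̂^k_{a0} = Γ̂^k_{0a} = K^k_a := ½ g^{kl} ∂ₜg_{al}` (the shape operator
`shapeOp` of the slices `t = const`), and the purely spatial ones are those of `g(t)`. Hence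
`R̂^k_{ipq} = R^k_{ipq} + ½ K^k_i ∂ₜg_{pq} - ½ K^k_p ∂ₜg_{iq}` (Gauss equation) and
`R̂^k_{i00} = -∂ₜK^k_i - K^k_s K^s_i`. Lowering an index with `g K = ½ ∂ₜg`, and its time
derivative `g ∂ₜK = ½ ∂ₜ²g - ∂ₜg K`, the trace gives
`R̂_{ij} = R_{ij} + ½ ∂ₜ²g_{ij} + ¼ g^{pq} ∂ₜg_{ij} ∂ₜg_{pq} - ½ g^{pq} ∂ₜg_{ip} ∂ₜg_{jq}`. -/

open Topology

variable {n : ℕ}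

section PartialDerivatives

lemma pd_const (i : Fin n) (c : ℝ) (x : Fin n → ℝ) : pd i (fun _ => c) x = 0 := by
  simp [pd]

lemma pd_congr_of_eventuallyEq {f f' : (Fin n → ℝ) → ℝ} {x : Fin n → ℝ} (h : f =ᶠ[𝓝 x] f')
    (i : Fin n) : pd i f x = pd i f' x := by
  simp only [pd, h.fderiv_eq]

variable {f : ℝ × (Fin n → ℝ) → ℝ} {t : ℝ} {x : Fin n → ℝ}

lemma deriv_slice_eq_fderiv (hf : DifferentiableAt ℝ f (t, x)) :
    deriv (fun s => f (s, x)) t = fderiv ℝ f (t, x) (1, 0) :=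
  (hf.hasFDerivAt.comp_hasDerivAt t ((hasDerivAt_id t).prodMk (hasDerivAt_const t x))).deriv

lemma pd_slice_eq_fderiv (hf : DifferentiableAt ℝ f (t, x)) (c : Fin n) :
    pd c (fun y => f (t, y)) x = fderiv ℝ f (t, x) (0, Pi.single c 1) := by
  have h := hf.hasFDerivAt.comp x ((hasFDerivAt_const t x).prodMk (hasFDerivAt_id x))
  exact congrArg (· (Pi.single c 1)) h.fderiv

lemma contDiff_deriv_slice {k m : WithTop ℕ∞} (hf : ContDiff ℝ m f) (hkm : k + 1 ≤ m) :
    ContDiff ℝ k fun q : ℝ × (Fin n → ℝ) => deriv (fun s => f (s, q.2)) q.1 := by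
  have hd := hf.differentiable (ne_bot_of_le_ne_bot (by simp) hkm)
  simp only [deriv_slice_eq_fderiv (hd _)]
  exact (hf.fderiv_right hkm).clm_apply contDiff_const

lemma contDiff_pd_slice {k m : WithTop ℕ∞} (hf : ContDiff ℝ m f) (hkm : k + 1 ≤ m) (c : Fin n) :
    ContDiff ℝ k fun q : ℝ × (Fin n → ℝ) => pd c (fun y => f (q.1, y)) q.2 := by
  have hd := hf.differentiable (ne_bot_of_le_ne_bot (by simp) hkm)
  simp only [pd_slice_eq_fderiv (hd _)]
  exact (hf.fderiv_right hkm).clm_apply contDiff_const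

variable {w : Fin (n + 1) → ℝ}

lemma pd_comp_head_tail (hf : DifferentiableAt ℝ f (w 0, Fin.tail w)) (α : Fin (n + 1)) :
    pd α (fun v => f (v 0, Fin.tail v)) w =
      fderiv ℝ f (w 0, Fin.tail w)
        ((Pi.single α 1 : Fin (n + 1) → ℝ) 0, Fin.tail (Pi.single α 1 : Fin (n + 1) → ℝ)) := by
  let split : (Fin (n + 1) → ℝ) →L[ℝ] ℝ × (Fin n → ℝ) :=
    (ContinuousLinearMap.proj 0).prod
      (ContinuousLinearMap.pi fun m => ContinuousLinearMap.proj m.succ)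
  have h := hf.hasFDerivAt.comp w split.hasFDerivAt
  exact congrArg (· (Pi.single α 1)) h.fderiv

lemma pd_zero_comp_head_tail (hf : DifferentiableAt ℝ f (w 0, Fin.tail w)) :
    pd 0 (fun v => f (v 0, Fin.tail v)) w = deriv (fun s => f (s, Fin.tail w)) (w 0) := by
  rw [pd_comp_head_tail hf, deriv_slice_eq_fderiv hf]
  congr

lemma pd_succ_comp_head_tail (hf : DifferentiableAt ℝ f (w 0, Fin.tail w)) (c : Fin n) :
    pd c.succ (fun v => f (v 0, Fin.tail v)) w = pd c (fun y => f (w 0, y)) (Fin.tail w) := by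
  rw [pd_comp_head_tail hf, pd_slice_eq_fderiv hf]
  congr 1
  ext m
  · simp [(Fin.succ_ne_zero c).symm]
  · simp [Fin.tail, Pi.single_apply]

end PartialDerivatives

section MatrixCalculus

variable {E : Type*} [NormedAddCommGroup E] [NormedSpace ℝ E] {k : WithTop ℕ∞}
  {M : E → Matrix (Fin n) (Fin n) ℝ}

lemma contDiff_det (hM : ∀ a b, ContDiff ℝ k fun q => M q a b) :
    ContDiff ℝ k fun q => (M q).det := by
  simp only [Matrix.det_apply']
  exact ContDiff.sum fun σ _ => contDiff_const.mul (contDiff_prod fun i _ => hM (σ i) i)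

lemma contDiffAt_inv_apply (hM : ∀ a b, ContDiff ℝ k fun q => M q a b) {q : E}
    (hq : IsUnit (M q).det) (a b : Fin n) : ContDiffAt ℝ k (fun q => (M q)⁻¹ a b) q := by
  simp only [Matrix.inv_def, Matrix.smul_apply, Ring.inverse_eq_inv', smul_eq_mul,
    Matrix.adjugate_apply]
  refine ((contDiff_det hM).contDiffAt.inv hq.ne_zero).mul (contDiff_det fun c d => ?_).contDiffAt
  by_cases h : c = b
  · subst h
    simpa only [Matrix.updateRow_self] using contDiff_const
  · simpa only [Matrix.updateRow_ne h] using hM c d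

end MatrixCalculus

section LorentzBlock

/-- The block matrix `diag(-1, A)`. -/
def lorentzBlock (A : Matrix (Fin n) (Fin n) ℝ) : Matrix (Fin (n + 1)) (Fin (n + 1)) ℝ :=
  Matrix.of fun α β =>
    Fin.cases (Fin.cases (-1 : ℝ) (fun _ => 0) β) (fun i => Fin.cases (0 : ℝ) (fun j => A i j) β) α

variable (A : Matrix (Fin n) (Fin n) ℝ) (a b : Fin n)

@[simp] lemma lorentzBlock_zero_zero : lorentzBlock A 0 0 = -1 := rfl
@[simp] lemma lorentzBlock_zero_succ : lorentzBlock A 0 b.succ = 0 := rfl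
@[simp] lemma lorentzBlock_succ_zero : lorentzBlock A a.succ 0 = 0 := rfl
@[simp] lemma lorentzBlock_succ_succ : lorentzBlock A a.succ b.succ = A a b := rfl

lemma inv_lorentzBlock {A : Matrix (Fin n) (Fin n) ℝ} (hA : IsUnit A.det) :
    (lorentzBlock A)⁻¹ = lorentzBlock A⁻¹ := by
  refine Matrix.inv_eq_right_inv ?_
  ext α β
  rw [Matrix.mul_apply, Fin.sum_univ_succ]
  cases α using Fin.cases <;> cases β using Fin.cases <;>
    simp [Matrix.one_apply, ← Matrix.mul_apply, Matrix.mul_nonsing_inv _ hA,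
      (Fin.succ_ne_zero _).symm]

lemma lorentz_eq_lorentzBlock (g : ℝ → (Fin n → ℝ) → Matrix (Fin n) (Fin n) ℝ)
    (w : Fin (n + 1) → ℝ) : lorentz g w = lorentzBlock (g (w 0) (Fin.tail w)) := rfl

end LorentzBlock

section Christoffel

variable {g : ℝ → (Fin n → ℝ) → Matrix (Fin n) (Fin n) ℝ}

def shapeOp (g : ℝ → (Fin n → ℝ) → Matrix (Fin n) (Fin n) ℝ) (t : ℝ) (x : Fin n → ℝ)
    (k a : Fin n) : ℝ :=
  (1 / 2) * ∑ l, (g t x)⁻¹ k l * deriv (fun s => g s x a l) t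

lemma chris_lorentz_zero_zero (α : Fin (n + 1)) (w : Fin (n + 1) → ℝ) :
    chris (lorentz g) α 0 0 w = 0 := by
  simp [chris, lorentz_eq_lorentzBlock, Fin.sum_univ_succ, pd_const]

variable (hg : ∀ a b, Differentiable ℝ fun q : ℝ × (Fin n → ℝ) => g q.1 q.2 a b)
  (w : Fin (n + 1) → ℝ)
include hg

lemma pd_zero_metric (a b : Fin n) :
    pd 0 (fun v => g (v 0) (Fin.tail v) a b) w = deriv (fun s => g s (Fin.tail w) a b) (w 0) :=
  pd_zero_comp_head_tail (f := fun q => g q.1 q.2 a b) (hg a b _)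

lemma pd_succ_metric (c a b : Fin n) :
    pd c.succ (fun v => g (v 0) (Fin.tail v) a b) w =
      pd c (fun y => g (w 0) y a b) (Fin.tail w) :=
  pd_succ_comp_head_tail (f := fun q => g q.1 q.2 a b) (hg a b _) c

variable (hw : IsUnit (g (w 0) (Fin.tail w)).det)
include hw

lemma chris_lorentz_zero_succ_succ (a b : Fin n) :
    chris (lorentz g) 0 a.succ b.succ w =
      (1 / 2) * deriv (fun s => g s (Fin.tail w) a b) (w 0) := by
  simp [chris, lorentz_eq_lorentzBlock, inv_lorentzBlock hw, Fin.sum_univ_succ, pd_const,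
    pd_zero_metric hg]

lemma chris_lorentz_succ_succ_zero (k a : Fin n) :
    chris (lorentz g) k.succ a.succ 0 w = shapeOp g (w 0) (Fin.tail w) k a := by
  simp [chris, shapeOp, lorentz_eq_lorentzBlock, inv_lorentzBlock hw, Fin.sum_univ_succ, pd_const,
    pd_zero_metric hg]

lemma chris_lorentz_succ_zero_succ (k a : Fin n) :
    chris (lorentz g) k.succ 0 a.succ w = shapeOp g (w 0) (Fin.tail w) k a := by
  simp [chris, shapeOp, lorentz_eq_lorentzBlock, inv_lorentzBlock hw, Fin.sum_univ_succ, pd_const,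
    pd_zero_metric hg]

lemma chris_lorentz_succ_succ_succ (k a b : Fin n) :
    chris (lorentz g) k.succ a.succ b.succ w = chris (g (w 0)) k a b (Fin.tail w) := by
  simp [chris, lorentz_eq_lorentzBlock, inv_lorentzBlock hw, Fin.sum_univ_succ, pd_const,
    pd_succ_metric hg]

end Christoffel

section ChristoffelDerivatives

variable {g : ℝ → (Fin n → ℝ) → Matrix (Fin n) (Fin n) ℝ}

/-- Derivatives of `Γ̂` at `z` see `(lorentz g)⁻¹` near `z`, and `Matrix.inv` is the block inverse
only where `g` is invertible. -/
lemma eventually_isUnit_det (hg : ∀ a b, Continuous fun q : ℝ × (Fin n → ℝ) => g q.1 q.2 a b)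
    {z : Fin (n + 1) → ℝ} (hz : IsUnit (g (z 0) (Fin.tail z)).det) :
    ∀ᶠ w in 𝓝 z, IsUnit (g (w 0) (Fin.tail w)).det := by
  have hsplit : Continuous fun w : Fin (n + 1) → ℝ => (w 0, Fin.tail w) :=
    (continuous_apply 0).prodMk (continuous_pi fun m => continuous_apply m.succ)
  have hdet : Continuous fun w : Fin (n + 1) → ℝ => (g (w 0) (Fin.tail w)).det :=
    Continuous.matrix_det (continuous_matrix fun a b => (hg a b).comp hsplit)
  exact (hdet.continuousAt.eventually_ne hz.ne_zero).mono fun w hw => hw.isUnit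

variable (hg : ∀ a b, ContDiff ℝ 2 fun q : ℝ × (Fin n → ℝ) => g q.1 q.2 a b)
include hg

lemma differentiableAt_shapeOp {q : ℝ × (Fin n → ℝ)} (hq : IsUnit (g q.1 q.2).det) (k a : Fin n) :
    DifferentiableAt ℝ (fun q : ℝ × (Fin n → ℝ) => shapeOp g q.1 q.2 k a) q := by
  unfold shapeOp
  refine (DifferentiableAt.fun_sum fun l _ => ?_).const_mul _
  exact ((contDiffAt_inv_apply hg hq k l).differentiableAt (by simp)).mul
    ((contDiff_deriv_slice (f := fun q => g q.1 q.2 a l) (k := 1) (hg a l)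
      (by norm_num)).differentiable (by simp) q)

lemma differentiableAt_chris {q : ℝ × (Fin n → ℝ)} (hq : IsUnit (g q.1 q.2).det) (k a b : Fin n) :
    DifferentiableAt ℝ (fun q : ℝ × (Fin n → ℝ) => chris (g q.1) k a b q.2) q := by
  have hpd : ∀ c a b : Fin n,
      Differentiable ℝ fun q : ℝ × (Fin n → ℝ) => pd c (fun y => g q.1 y a b) q.2 :=
    fun c a b => (contDiff_pd_slice (f := fun q => g q.1 q.2 a b) (k := 1) (hg a b) (by norm_num)
      c).differentiable (by simp)
  unfold chris
  refine (DifferentiableAt.fun_sum fun l _ => ?_).const_mul _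
  exact ((contDiffAt_inv_apply hg hq k l).differentiableAt (by simp)).mul
    (((hpd a b l).add (hpd b a l)).sub (hpd l a b) q)

variable {z : Fin (n + 1) → ℝ} (hz : IsUnit (g (z 0) (Fin.tail z)).det)
include hz

lemma pd_zero_chris_lorentz_succ_succ_zero (k a : Fin n) :
    pd 0 (chris (lorentz g) k.succ a.succ 0) z =
      deriv (fun s => shapeOp g s (Fin.tail z) k a) (z 0) := by
  have hg1 : ∀ a b, Differentiable ℝ fun q : ℝ × (Fin n → ℝ) => g q.1 q.2 a b :=
    fun a b => (hg a b).differentiable (by simp)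
  rw [pd_congr_of_eventuallyEq ((eventually_isUnit_det (fun a b => (hg a b).continuous) hz).mono
    fun w hw => chris_lorentz_succ_succ_zero hg1 w hw k a)]
  exact pd_zero_comp_head_tail (f := fun q => shapeOp g q.1 q.2 k a)
    (differentiableAt_shapeOp hg hz k a)

lemma pd_succ_chris_lorentz_succ_succ_succ (c k a b : Fin n) :
    pd c.succ (chris (lorentz g) k.succ a.succ b.succ) z =
      pd c (chris (g (z 0)) k a b) (Fin.tail z) := by
  have hg1 : ∀ a b, Differentiable ℝ fun q : ℝ × (Fin n → ℝ) => g q.1 q.2 a b :=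
    fun a b => (hg a b).differentiable (by simp)
  rw [pd_congr_of_eventuallyEq ((eventually_isUnit_det (fun a b => (hg a b).continuous) hz).mono
    fun w hw => chris_lorentz_succ_succ_succ hg1 w hw k a b)]
  exact pd_succ_comp_head_tail (f := fun q => chris (g q.1) k a b q.2)
    (differentiableAt_chris hg hz k a b) c

end ChristoffelDerivatives

section ShapeOperator

variable {g : ℝ → (Fin n → ℝ) → Matrix (Fin n) (Fin n) ℝ} {x : Fin n → ℝ}

lemma sum_mul_shapeOp {t : ℝ} (h : IsUnit (g t x).det) (j a : Fin n) :
    ∑ r, g t x j r * shapeOp g t x r a = (1 / 2) * deriv (fun s => g s x a j) t := by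
  have hinv : ∀ l, ∑ r, g t x j r * (g t x)⁻¹ r l = (1 : Matrix (Fin n) (Fin n) ℝ) j l :=
    fun l => by rw [← Matrix.mul_apply, Matrix.mul_nonsing_inv _ h]
  calc ∑ r, g t x j r * shapeOp g t x r a
      = (1 / 2) * ∑ l, (∑ r, g t x j r * (g t x)⁻¹ r l) * deriv (fun s => g s x a l) t := by
        simp only [shapeOp, Finset.mul_sum, Finset.sum_mul]
        rw [Finset.sum_comm]
        exact Finset.sum_congr rfl fun _ _ => Finset.sum_congr rfl fun _ _ => by ring
    _ = (1 / 2) * deriv (fun s => g s x a j) t := by simp [hinv, Matrix.one_apply]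

lemma sum_mul_deriv_shapeOp (hg : ∀ a b, ContDiff ℝ 2 fun q : ℝ × (Fin n → ℝ) => g q.1 q.2 a b)
    (hx : ∀ s, IsUnit (g s x).det) (t : ℝ) (j a : Fin n) :
    ∑ r, g t x j r * deriv (fun s => shapeOp g s x r a) t =
      (1 / 2) * deriv (fun s => deriv (fun u => g u x a j) s) t -
        ∑ r, deriv (fun s => g s x j r) t * shapeOp g t x r a := by
  have hslice {F : ℝ × (Fin n → ℝ) → ℝ} (hF : DifferentiableAt ℝ F (t, x)) :
      HasDerivAt (fun s => F (s, x)) (deriv (fun s => F (s, x)) t) t :=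
    (hF.comp t (differentiableAt_id.prodMk (differentiableAt_const x))).hasDerivAt
  have hprod : HasDerivAt (fun s => ∑ r, g s x j r * shapeOp g s x r a)
      (∑ r, (deriv (fun s => g s x j r) t * shapeOp g t x r a +
        g t x j r * deriv (fun s => shapeOp g s x r a) t)) t :=
    HasDerivAt.fun_sum fun r _ =>
      (hslice ((hg j r).differentiable (by simp) _)).mul
        (hslice (differentiableAt_shapeOp hg (hx t) r a))
  -- `g K = ½ ∂ₜ g` holds for all `t`; differentiating it avoids computing `∂ₜ g⁻¹`.
  have hhalf : (fun s => ∑ r, g s x j r * shapeOp g s x r a) =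
      fun s => (1 / 2) * deriv (fun u => g u x a j) s :=
    funext fun s => sum_mul_shapeOp (hx s) j a
  have h := hprod.deriv
  rw [hhalf, deriv_const_mul_field, Finset.sum_add_distrib] at h
  linarith

end ShapeOperator

section Curvature

variable {g : ℝ → (Fin n → ℝ) → Matrix (Fin n) (Fin n) ℝ}
  (hg : ∀ a b, ContDiff ℝ 2 fun q : ℝ × (Fin n → ℝ) => g q.1 q.2 a b)
  {z : Fin (n + 1) → ℝ} (hz : IsUnit (g (z 0) (Fin.tail z)).det)
include hg hz

lemma riemUp_lorentz_succ_succ_zero_zero (r i : Fin n) :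
    riemUp (lorentz g) r.succ i.succ 0 0 z =
      -deriv (fun s => shapeOp g s (Fin.tail z) r i) (z 0) -
        ∑ s, shapeOp g (z 0) (Fin.tail z) r s * shapeOp g (z 0) (Fin.tail z) s i := by
  have hg1 : ∀ a b, Differentiable ℝ fun q : ℝ × (Fin n → ℝ) => g q.1 q.2 a b :=
    fun a b => (hg a b).differentiable (by simp)
  have h00 : ∀ α, chris (lorentz g) α 0 0 = fun _ => 0 :=
    fun α => funext (chris_lorentz_zero_zero α)
  simp only [riemUp, h00, pd_const, pd_zero_chris_lorentz_succ_succ_zero hg hz, Fin.sum_univ_succ,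
    chris_lorentz_succ_zero_succ hg1 z hz, chris_lorentz_succ_succ_zero hg1 z hz, mul_zero,
    zero_mul, Finset.sum_neg_distrib, zero_sub, zero_add]
  ring

lemma riemUp_lorentz_succ_succ_succ_succ (r i p q : Fin n) :
    riemUp (lorentz g) r.succ i.succ p.succ q.succ z =
      riemUp (g (z 0)) r i p q (Fin.tail z) +
        shapeOp g (z 0) (Fin.tail z) r i *
          ((1 / 2) * deriv (fun s => g s (Fin.tail z) p q) (z 0)) -
        shapeOp g (z 0) (Fin.tail z) r p *
          ((1 / 2) * deriv (fun s => g s (Fin.tail z) i q) (z 0)) := by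
  have hg1 : ∀ a b, Differentiable ℝ fun q : ℝ × (Fin n → ℝ) => g q.1 q.2 a b :=
    fun a b => (hg a b).differentiable (by simp)
  simp only [riemUp, Fin.sum_univ_succ, pd_succ_chris_lorentz_succ_succ_succ hg hz,
    chris_lorentz_succ_succ_zero hg1 z hz, chris_lorentz_zero_succ_succ hg1 z hz,
    chris_lorentz_succ_succ_succ hg1 z hz]
  ring

end Curvature

section Ricci

variable {g : ℝ → (Fin n → ℝ) → Matrix (Fin n) (Fin n) ℝ}
  {z : Fin (n + 1) → ℝ}

lemma ricci_lorentz_succ_succ_eq_sum (hz : IsUnit (g (z 0) (Fin.tail z)).det) (i j : Fin n) :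
    ricci (lorentz g) i.succ j.succ z =
      -∑ r, g (z 0) (Fin.tail z) j r * riemUp (lorentz g) r.succ i.succ 0 0 z +
        ∑ p, ∑ q, (g (z 0) (Fin.tail z))⁻¹ p q *
          ∑ r, g (z 0) (Fin.tail z) j r * riemUp (lorentz g) r.succ i.succ p.succ q.succ z := by
  simp [ricci, riem, lorentz_eq_lorentzBlock, inv_lorentzBlock hz, Fin.sum_univ_succ]

variable (hg : ∀ a b, ContDiff ℝ 2 fun q : ℝ × (Fin n → ℝ) => g q.1 q.2 a b)
include hg

lemma sum_mul_riemUp_lorentz_space (hz : IsUnit (g (z 0) (Fin.tail z)).det) (i j p q : Fin n) :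
    ∑ r, g (z 0) (Fin.tail z) j r * riemUp (lorentz g) r.succ i.succ p.succ q.succ z =
      riem (g (z 0)) i p j q (Fin.tail z) +
        (1 / 4) * (deriv (fun s => g s (Fin.tail z) i j) (z 0) *
          deriv (fun s => g s (Fin.tail z) p q) (z 0)) -
        (1 / 4) * (deriv (fun s => g s (Fin.tail z) p j) (z 0) *
          deriv (fun s => g s (Fin.tail z) i q) (z 0)) := by
  simp only [riemUp_lorentz_succ_succ_succ_succ hg hz, mul_add, mul_sub, Finset.sum_add_distrib,
    Finset.sum_sub_distrib, ← mul_assoc, ← Finset.sum_mul, sum_mul_shapeOp hz]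
  simp only [riem]
  ring

variable (hdet : ∀ s, IsUnit (g s (Fin.tail z)).det) (hsymm : ∀ s, (g s (Fin.tail z)).IsSymm)
include hdet hsymm

lemma sum_mul_riemUp_lorentz_time (i j : Fin n) :
    ∑ r, g (z 0) (Fin.tail z) j r * riemUp (lorentz g) r.succ i.succ 0 0 z =
      -(1 / 2) * deriv (fun t => deriv (fun s => g s (Fin.tail z) i j) t) (z 0) +
        (1 / 4) * ∑ p, ∑ q, (g (z 0) (Fin.tail z))⁻¹ p q *
          deriv (fun s => g s (Fin.tail z) i p) (z 0) *
          deriv (fun s => g s (Fin.tail z) j q) (z 0) := by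
  simp only [riemUp_lorentz_succ_succ_zero_zero hg (hdet _), mul_sub, mul_neg,
    Finset.sum_sub_distrib, Finset.sum_neg_distrib, sum_mul_deriv_shapeOp hg hdet]
  generalize Fin.tail z = x at hdet hsymm ⊢
  generalize z 0 = t
  have hD (a b : Fin n) : deriv (fun s => g s x a b) t = deriv (fun s => g s x b a) t :=
    congrArg (deriv · t) (funext fun s => (hsymm s).apply b a)
  have hKK : ∑ r, g t x j r * ∑ s, shapeOp g t x r s * shapeOp g t x s i =
      (1 / 2) * ∑ r, deriv (fun s => g s x j r) t * shapeOp g t x r i :=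
    calc ∑ r, g t x j r * ∑ s, shapeOp g t x r s * shapeOp g t x s i
        = ∑ s, (∑ r, g t x j r * shapeOp g t x r s) * shapeOp g t x s i := by
          simp only [Finset.mul_sum, Finset.sum_mul]
          rw [Finset.sum_comm]
          exact Finset.sum_congr rfl fun _ _ => Finset.sum_congr rfl fun _ _ => by ring
      _ = (1 / 2) * ∑ r, deriv (fun s => g s x j r) t * shapeOp g t x r i := by
          simp only [sum_mul_shapeOp (hdet t), Finset.mul_sum, hD _ j, mul_assoc]
  have hDK : ∑ r, deriv (fun s => g s x j r) t * shapeOp g t x r i =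
      (1 / 2) * ∑ p, ∑ q, (g t x)⁻¹ p q * deriv (fun s => g s x i p) t *
        deriv (fun s => g s x j q) t := by
    simp only [shapeOp, Finset.mul_sum]
    rw [Finset.sum_comm]
    refine Finset.sum_congr rfl fun p _ => Finset.sum_congr rfl fun q _ => ?_
    rw [(hsymm t).inv.apply p q]
    ring
  rw [hKK, hDK]
  ring

lemma ricci_lorentz_succ_succ (i j : Fin n) :
    ricci (lorentz g) i.succ j.succ z =
      ricci (g (z 0)) i j (Fin.tail z) +
        (1 / 2) * deriv (fun t => deriv (fun s => g s (Fin.tail z) i j) t) (z 0) +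
        (1 / 4) * ∑ p, ∑ q, (g (z 0) (Fin.tail z))⁻¹ p q *
          deriv (fun s => g s (Fin.tail z) i j) (z 0) *
          deriv (fun s => g s (Fin.tail z) p q) (z 0) -
        (1 / 2) * ∑ p, ∑ q, (g (z 0) (Fin.tail z))⁻¹ p q *
          deriv (fun s => g s (Fin.tail z) i p) (z 0) *
          deriv (fun s => g s (Fin.tail z) j q) (z 0) := by
  rw [ricci_lorentz_succ_succ_eq_sum (hdet _), sum_mul_riemUp_lorentz_time hg hdet hsymm]
  simp only [sum_mul_riemUp_lorentz_space hg (hdet _)]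
  generalize Fin.tail z = x at hsymm ⊢
  generalize z 0 = t
  have hterm (p q : Fin n) :
      (g t x)⁻¹ p q * (riem (g t) i p j q x +
        (1 / 4) * (deriv (fun s => g s x i j) t * deriv (fun s => g s x p q) t) -
        (1 / 4) * (deriv (fun s => g s x p j) t * deriv (fun s => g s x i q) t)) =
      (g t x)⁻¹ p q * riem (g t) i p j q x +
        (1 / 4) * ((g t x)⁻¹ p q * deriv (fun s => g s x i j) t * deriv (fun s => g s x p q) t) -
        (1 / 4) * ((g t x)⁻¹ p q * deriv (fun s => g s x p j) t *
          deriv (fun s => g s x i q) t) := by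
    ring
  have hswap :
      ∑ p, ∑ q, (g t x)⁻¹ p q * deriv (fun s => g s x p j) t * deriv (fun s => g s x i q) t =
      ∑ p, ∑ q, (g t x)⁻¹ p q * deriv (fun s => g s x i p) t * deriv (fun s => g s x j q) t := by
    rw [Finset.sum_comm]
    refine Finset.sum_congr rfl fun p _ => Finset.sum_congr rfl fun q _ => ?_
    rw [(hsymm t).inv.apply p q,
      congrArg (deriv · t) (funext fun s => (hsymm s).apply j q : (fun s => g s x q j) = _)]
    ring
  simp only [hterm, Finset.sum_add_distrib, Finset.sum_sub_distrib, ← Finset.mul_sum, hswap, ricci]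
  ring

end Ricci

theorem lorentz_vacuum_einstein_spatial_general (n : ℕ)
    (U : Set (Fin n → ℝ))
    (g : ℝ → (Fin n → ℝ) → Matrix (Fin n) (Fin n) ℝ)
    (hsmooth : ∀ i j, ContDiff ℝ (⊤ : ℕ∞) (fun q : ℝ × (Fin n → ℝ) => g q.1 q.2 i j))
    (hmetric : ∀ t : ℝ, ∀ x ∈ U, (g t x).PosDef) :
    ∀ z : Fin (n + 1) → ℝ, (fun m => z m.succ) ∈ U →
      ∀ i j : Fin n,
        ricci (lorentz g) i.succ j.succ z = 0 ↔
          deriv (fun t => deriv (fun r => g r (fun m => z m.succ) i j) t) (z 0) =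
            -2 * ricci (g (z 0)) i j (fun m => z m.succ)
            - (1 / 2) * ∑ p, ∑ q, (g (z 0) (fun m => z m.succ))⁻¹ p q *
                deriv (fun t => g t (fun m => z m.succ) i j) (z 0) *
                deriv (fun t => g t (fun m => z m.succ) p q) (z 0)
            + ∑ p, ∑ q, (g (z 0) (fun m => z m.succ))⁻¹ p q *
                deriv (fun t => g t (fun m => z m.succ) i p) (z 0) *
                deriv (fun t => g t (fun m => z m.succ) j q) (z 0) := by
  intro z hz i j
  have hg (a b : Fin n) : ContDiff ℝ 2 fun q : ℝ × (Fin n → ℝ) => g q.1 q.2 a b :=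
    (hsmooth a b).of_le (WithTop.coe_le_coe.mpr le_top)
  have hdet (s : ℝ) : IsUnit (g s (Fin.tail z)).det := (hmetric s _ hz).det_pos.ne'.isUnit
  have hsymm (s : ℝ) : (g s (Fin.tail z)).IsSymm :=
    Matrix.isHermitian_iff_isSymm.mp (hmetric s _ hz).isHermitian
  rw [ricci_lorentz_succ_succ hg hdet hsymm, show Fin.tail z = fun m => z m.succ from rfl]
  constructor <;> intro h <;> linarith

/-- **Spatial vacuum Einstein equations for a metric with orthogonal time-axis**
(equation (6.4)): `R̂_{ij} = 0` iff
`∂²g_{ij}/∂t² = -2 R_{ij} - (1/2) g^{pq} (∂g_{ij}/∂t)(∂g_{pq}/∂t)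
  + g^{pq} (∂g_{ip}/∂t)(∂g_{jq}/∂t)`; the hyperbolic geometric flow consists of the
leading (second-order) terms of these equations. -/
theorem lorentz_vacuum_einstein_spatial (n : ℕ) (hn : 2 ≤ n)
    (U : Set (Fin n → ℝ)) (hU : IsOpen U)
    (g : ℝ → (Fin n → ℝ) → Matrix (Fin n) (Fin n) ℝ)
    (hsmooth : ∀ i j, ContDiff ℝ (⊤ : ℕ∞) (fun q : ℝ × (Fin n → ℝ) => g q.1 q.2 i j))
    (hmetric : ∀ t : ℝ, ∀ x ∈ U, (g t x).PosDef) :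
    ∀ z : Fin (n + 1) → ℝ, (fun m => z m.succ) ∈ U →
      ∀ i j : Fin n,
        ricci (lorentz g) i.succ j.succ z = 0 ↔
          deriv (fun t => deriv (fun r => g r (fun m => z m.succ) i j) t) (z 0) =
            -2 * ricci (g (z 0)) i j (fun m => z m.succ)
            - (1 / 2) * ∑ p, ∑ q, (g (z 0) (fun m => z m.succ))⁻¹ p q *
                deriv (fun t => g t (fun m => z m.succ) i j) (z 0) *
                deriv (fun t => g t (fun m => z m.succ) p q) (z 0)
            + ∑ p, ∑ q, (g (z 0) (fun m => z m.succ))⁻¹ p q *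
                deriv (fun t => g t (fun m => z m.succ) i p) (z 0) *
                deriv (fun t => g t (fun m => z m.succ) j q) (z 0) :=
  lorentz_vacuum_einstein_spatial_general n U g hsmooth hmetric
end
end

section
/- Hyperbolic geometric flow in elliptic coordinates (equations (3.6)–(3.7)): let g be a Riemannian metric in local coordinates on an open set U ⊆ ℝⁿ whose contracted Christoffel symbols vanish identically on U, i.e. Γ^k = Σ_{p,q} g^{pq} Γ^k_{pq} = 0 on U for every k. Then on U, for all indices i, j: −2R_{ij} = Σ_{k,l} g^{kl} ∂²g_{ij}/∂x^k∂x^l + H̃_{ij}, where H̃_{ij} = −2 Σ_{k,l,p,q} g^{kl} g_{pq} Γ^p_{ik} Γ^q_{jl} − Σ_{k,p,q,r,s} g_{ik} Γ^k_{rs} g^{pr} g^{qs} ∂g_{pq}/∂x^j − Σ_{k,p,q,r,s} g_{jk} Γ^k_{rs} g^{pr} g^{qs} ∂g_{pq}/∂x^i. Consequently, a smooth family g(x,t) of such metrics satisfies the hyperbolic geometric flow ∂²g_{ij}/∂t² = −2R_{ij} on U if and only if it satisfies the strictly hyperbolic system ∂²g_{ij}/∂t² = Σ_{k,l} g^{kl}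 ∂²g_{ij}/∂x^k∂x^l + H̃_{ij}. -/
noncomputable section

open scoped BigOperators

/-- The contracted Christoffel symbols `Γ^k = Σ g^{pq} Γ^k_{pq}`. -/
def contractedChris {n : ℕ} (g : (Fin n → ℝ) → Matrix (Fin n) (Fin n) ℝ) (k : Fin n)
    (x : Fin n → ℝ) : ℝ :=
  ∑ p, ∑ q, (g x)⁻¹ p q * chris g k p q x

/-- The quadratic nonlinearity `H̃_{ij}` of (3.7). -/
def Htilde {n : ℕ} (g : (Fin n → ℝ) → Matrix (Fin n) (Fin n) ℝ) (i j : Fin n)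
    (x : Fin n → ℝ) : ℝ :=
  -2 * ∑ k, ∑ l, ∑ p, ∑ q, (g x)⁻¹ k l * g x p q * chris g p i k x * chris g q j l x
  - ∑ k, ∑ p, ∑ q, ∑ r, ∑ s,
      g x i k * chris g k r s x * (g x)⁻¹ p r * (g x)⁻¹ q s * pd j (fun w => g w p q) x
  - ∑ k, ∑ p, ∑ q, ∑ r, ∑ s,
      g x j k * chris g k r s x * (g x)⁻¹ p r * (g x)⁻¹ q s * pd i (fun w => g w p q) x

/-!
At a point, everything is an identity between `g`, `g⁻¹`, `∂g` and `∂²g`. Lowering the upper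
index of `∂ᵢΓᵖ_{ab}` turns it into second derivatives of `g` minus `∂ᵢg_{kq} Γ^q_{ab}`, and metric
compatibility `∂ₐg_{kq} = g_{kc}Γᶜ_{aq} + g_{qc}Γᶜ_{ak}` turns the remaining first-order terms of
`R_{ik}` into the quadratic part of `H̃_{ik}`. The condition `Γᵏ = 0` kills the contraction
`g^{ab}Γ^q_{ab}`; differentiated, it says that `g^{ab}∂ᵢ∂ₐg_{bk} - ½ g^{ab}∂ᵢ∂ₖg_{ab}` equals the
first-order term `-∂ᵢ(g^{ab}) Γ_{kab}`. Using this for `(i, k)` and `(k, i)` removes every second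
derivative except `g^{ab}∂ₐ∂_b g_{ik}`.
-/

open Finset Filter Topology
open scoped Matrix

section PartialDerivative

variable {n : ℕ} {f f' : (Fin n → ℝ) → ℝ} {x : Fin n → ℝ}

theorem pd_congr (i : Fin n) (h : f =ᶠ[𝓝 x] f') : pd i f x = pd i f' x := by
  rw [pd, pd, h.fderiv_eq]

theorem pd_eq_zero_of_eventuallyEq_const {c : ℝ} (i : Fin n) (h : f =ᶠ[𝓝 x] fun _ => c) :
    pd i f x = 0 := by
  rw [pd_congr i h]
  simp [pd]

theorem pd_add (i : Fin n) (hf : DifferentiableAt ℝ f x) (hf' : DifferentiableAt ℝ f' x) :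
    pd i (fun y => f y + f' y) x = pd i f x + pd i f' x := by
  simp [pd, fderiv_fun_add hf hf']

theorem pd_sub (i : Fin n) (hf : DifferentiableAt ℝ f x) (hf' : DifferentiableAt ℝ f' x) :
    pd i (fun y => f y - f' y) x = pd i f x - pd i f' x := by
  simp [pd, fderiv_fun_sub hf hf']

theorem pd_mul (i : Fin n) (hf : DifferentiableAt ℝ f x) (hf' : DifferentiableAt ℝ f' x) :
    pd i (fun y => f y * f' y) x = f x * pd i f' x + pd i f x * f' x := by
  simp [pd, fderiv_fun_mul hf hf', mul_comm]

theorem pd_const_mul (i : Fin n) (c : ℝ) (hf : DifferentiableAt ℝ f x) :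
    pd i (fun y => c * f y) x = c * pd i f x := by
  simp [pd, fderiv_const_mul hf c]

theorem pd_sum {ι : Type*} (i : Fin n) (s : Finset ι) {F : ι → (Fin n → ℝ) → ℝ}
    (hF : ∀ a ∈ s, DifferentiableAt ℝ (F a) x) :
    pd i (fun y => ∑ a ∈ s, F a y) x = ∑ a ∈ s, pd i (F a) x := by
  simp [pd, fderiv_fun_sum hF]

theorem differentiable_pd (i : Fin n) (hf : ContDiff ℝ 2 f) : Differentiable ℝ (pd i f) :=
  ((hf.fderiv_right (m := 1) (by norm_num)).clm_apply contDiff_const).differentiable one_ne_zero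

theorem pd_pd_eq_fderiv_fderiv (hf : ContDiff ℝ 2 f) (i j : Fin n) :
    pd i (pd j f) x = fderiv ℝ (fderiv ℝ f) x (Pi.single i 1) (Pi.single j 1) := by
  have hd : DifferentiableAt ℝ (fderiv ℝ f) x :=
    (hf.fderiv_right (m := 1) (by norm_num)).differentiable one_ne_zero x
  change fderiv ℝ (fun y => fderiv ℝ f y (Pi.single j 1)) x (Pi.single i 1) = _
  rw [fderiv_clm_apply hd (differentiableAt_const _)]
  simp

theorem pd_pd_comm (hf : ContDiff ℝ 2 f) (i j : Fin n) :
    pd i (pd j f) x = pd j (pd i f) x := by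
  rw [pd_pd_eq_fderiv_fderiv hf, pd_pd_eq_fderiv_fderiv hf,
    (hf.contDiffAt.isSymmSndFDerivAt (by simp)).eq]

end PartialDerivative

section MatrixInverse

variable {ι : Type*} [Fintype ι] [DecidableEq ι] {E : Type*} [NormedAddCommGroup E]
  [NormedSpace ℝ E]

theorem contDiff_det_of_entries {k : WithTop ℕ∞} {M : E → Matrix ι ι ℝ}
    (h : ∀ a b, ContDiff ℝ k fun y => M y a b) : ContDiff ℝ k fun y => (M y).det := by
  simp only [Matrix.det_apply]
  exact ContDiff.sum fun σ _ => (contDiff_prod fun i _ => h _ _).const_smul _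

theorem contDiff_adjugate_apply {k : WithTop ℕ∞} {M : E → Matrix ι ι ℝ}
    (h : ∀ a b, ContDiff ℝ k fun y => M y a b) (a b : ι) :
    ContDiff ℝ k fun y => (M y).adjugate a b := by
  simp only [Matrix.adjugate_apply]
  refine contDiff_det_of_entries fun c d => ?_
  simp only [Matrix.updateRow_apply]
  split_ifs
  · exact contDiff_const
  · exact h c d

theorem differentiableAt_inv_apply {M : E → Matrix ι ι ℝ}
    (h : ∀ a b, ContDiff ℝ 1 fun y => M y a b) {x : E} (hx : IsUnit (M x).det) (a b : ι) :
    DifferentiableAt ℝ (fun y => (M y)⁻¹ a b) x := by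
  simp only [Matrix.inv_def, Matrix.smul_apply, smul_eq_mul, Ring.inverse_eq_inv']
  exact (((contDiff_det_of_entries h).differentiable one_ne_zero x).inv hx.ne_zero).mul
    ((contDiff_adjugate_apply h a b).differentiable one_ne_zero x)

end MatrixInverse

section MatrixDerivative

variable {ι : Type*} {n : ℕ} {x : Fin n → ℝ}

def pdMatrix {κ : Type*} (m : Fin n) (M : (Fin n → ℝ) → Matrix ι κ ℝ) (x : Fin n → ℝ) :
    Matrix ι κ ℝ :=
  Matrix.of fun a b => pd m (fun y => M y a b) x

theorem pdMatrix_congr {M M' : (Fin n → ℝ) → Matrix ι ι ℝ} (m : Fin n) (h : M =ᶠ[𝓝 x] M') :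
    pdMatrix m M x = pdMatrix m M' x := by
  ext a b
  exact pd_congr m (h.mono fun y hy => congrFun (congrFun hy a) b)

theorem isSymm_pdMatrix {M : (Fin n → ℝ) → Matrix ι ι ℝ} (m : Fin n)
    (h : ∀ᶠ y in 𝓝 x, (M y).IsSymm) : (pdMatrix m M x).IsSymm :=
  Matrix.IsSymm.ext fun a b => pd_congr m (h.mono fun _ hy => hy.apply a b)

theorem pdMatrix_mul [Fintype ι] {M N : (Fin n → ℝ) → Matrix ι ι ℝ} (m : Fin n)
    (hM : ∀ a b, DifferentiableAt ℝ (fun y => M y a b) x)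
    (hN : ∀ a b, DifferentiableAt ℝ (fun y => N y a b) x) :
    pdMatrix m (fun y => M y * N y) x = M x * pdMatrix m N x + pdMatrix m M x * N x := by
  ext a b
  simp only [pdMatrix, Matrix.of_apply, Matrix.mul_apply, Matrix.add_apply]
  rw [pd_sum m _ fun c _ => (hM a c).fun_mul (hN c b), ← sum_add_distrib]
  exact sum_congr rfl fun c _ => pd_mul m (hM a c) (hN c b)

theorem pdMatrix_inv [Fintype ι] [DecidableEq ι] {M : (Fin n → ℝ) → Matrix ι ι ℝ} (m : Fin n)
    (hM : ∀ a b, ContDiff ℝ 1 fun y => M y a b) (hdet : ∀ᶠ y in 𝓝 x, IsUnit (M y).det) :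
    pdMatrix m (fun y => (M y)⁻¹) x = -((M x)⁻¹ * pdMatrix m M x * (M x)⁻¹) := by
  have hx : IsUnit (M x).det := hdet.self_of_nhds
  have hprod : M x * pdMatrix m (fun y => (M y)⁻¹) x + pdMatrix m M x * (M x)⁻¹ = 0 := by
    rw [← pdMatrix_mul m (fun a b => (hM a b).differentiable one_ne_zero x)
      (differentiableAt_inv_apply hM hx), pdMatrix_congr m (hdet.mono fun y hy =>
        Matrix.mul_nonsing_inv (M y) hy)]
    ext a b
    exact pd_eq_zero_of_eventuallyEq_const m (Eventually.of_forall fun _ => rfl)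
  calc pdMatrix m (fun y => (M y)⁻¹) x
      = (M x)⁻¹ * (M x * pdMatrix m (fun y => (M y)⁻¹) x) := by
        rw [← Matrix.mul_assoc, Matrix.nonsing_inv_mul _ hx, Matrix.one_mul]
    _ = -((M x)⁻¹ * pdMatrix m M x * (M x)⁻¹) := by
        rw [eq_neg_of_add_eq_zero_left hprod, Matrix.mul_neg, Matrix.mul_assoc]

end MatrixDerivative

/-- The second-order jet of a metric at a point: `g`, `dg m = ∂ₘ g` and `ddg m l = ∂ₘ ∂ₗ g`,
with the symmetries they have. The Christoffel symbols, Ricci tensor and `H̃` of a jet defined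
below are `chris`, `ricci` and `Htilde` with every derivative expressed through the jet. -/
structure MetricJet (n : ℕ) where
  g : Matrix (Fin n) (Fin n) ℝ
  dg : Fin n → Matrix (Fin n) (Fin n) ℝ
  ddg : Fin n → Fin n → Matrix (Fin n) (Fin n) ℝ
  isSymm_g : g.IsSymm
  isUnit_det_g : IsUnit g.det
  isSymm_dg : ∀ m, (dg m).IsSymm
  isSymm_ddg : ∀ m l, (ddg m l).IsSymm
  ddg_comm : ∀ m l, ddg m l = ddg l m

namespace MetricJet

variable {n : ℕ} (J : MetricJet n)

def christoffel (c a b : Fin n) : ℝ :=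
  (1 / 2) * ∑ l, J.g⁻¹ c l * (J.dg a b l + J.dg b a l - J.dg l a b)

def dginv (m : Fin n) : Matrix (Fin n) (Fin n) ℝ := -(J.g⁻¹ * J.dg m * J.g⁻¹)

def dChristoffel (m c a b : Fin n) : ℝ :=
  (1 / 2) * ∑ l, (J.dginv m c l * (J.dg a b l + J.dg b a l - J.dg l a b)
    + J.g⁻¹ c l * (J.ddg m a b l + J.ddg m b a l - J.ddg m l a b))

def contractedChristoffel (c : Fin n) : ℝ := ∑ p, ∑ q, J.g⁻¹ p q * J.christoffel c p q

def dContractedChristoffel (m c : Fin n) : ℝ :=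
  ∑ p, ∑ q, (J.dginv m p q * J.christoffel c p q + J.g⁻¹ p q * J.dChristoffel m c p q)

def ricci (i k : Fin n) : ℝ :=
  ∑ a, ∑ b, J.g⁻¹ a b * ∑ p, J.g k p * (J.dChristoffel i p a b - J.dChristoffel a p i b
    + ∑ q, (J.christoffel p i q * J.christoffel q a b - J.christoffel p a q * J.christoffel q i b))

def htilde (i j : Fin n) : ℝ :=
  -2 * ∑ k, ∑ l, ∑ p, ∑ q, J.g⁻¹ k l * J.g p q * J.christoffel p i k * J.christoffel q j l
  - ∑ k, ∑ p, ∑ q, ∑ r, ∑ s,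
      J.g i k * J.christoffel k r s * J.g⁻¹ p r * J.g⁻¹ q s * J.dg j p q
  - ∑ k, ∑ p, ∑ q, ∑ r, ∑ s,
      J.g j k * J.christoffel k r s * J.g⁻¹ p r * J.g⁻¹ q s * J.dg i p q

theorem inv_apply_comm (a b : Fin n) : J.g⁻¹ a b = J.g⁻¹ b a :=
  (J.isSymm_g.inv.apply a b).symm

theorem christoffel_comm (c a b : Fin n) : J.christoffel c a b = J.christoffel c b a := by
  simp only [christoffel, (J.isSymm_dg _).apply a b]
  congr 1
  exact sum_congr rfl fun l _ => by ring

-- `christoffelFirst a b l` is the Christoffel symbol of the first kind `Γ_{lab}`.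
def christoffelFirst (a b : Fin n) : Fin n → ℝ :=
  fun l => (1 / 2) * (J.dg a b l + J.dg b a l - J.dg l a b)

def dChristoffelFirst (m a b : Fin n) : Fin n → ℝ :=
  fun l => (1 / 2) * (J.ddg m a b l + J.ddg m b a l - J.ddg m l a b)

theorem christoffel_eq_mulVec (a b : Fin n) :
    (fun c => J.christoffel c a b) = J.g⁻¹ *ᵥ J.christoffelFirst a b := by
  ext c
  simp only [christoffel, christoffelFirst, Matrix.mulVec, dotProduct, mul_sum]
  exact sum_congr rfl fun l _ => by ring

theorem dChristoffel_eq_mulVec (m a b : Fin n) :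
    (fun c => J.dChristoffel m c a b)
      = J.dginv m *ᵥ J.christoffelFirst a b + J.g⁻¹ *ᵥ J.dChristoffelFirst m a b := by
  ext c
  simp only [dChristoffel, christoffelFirst, dChristoffelFirst, Matrix.mulVec, dotProduct,
    Pi.add_apply, mul_sum, ← sum_add_distrib]
  exact sum_congr rfl fun l _ => by ring

theorem g_mulVec_christoffel (a b : Fin n) :
    J.g *ᵥ (fun c => J.christoffel c a b) = J.christoffelFirst a b := by
  rw [christoffel_eq_mulVec, Matrix.mulVec_mulVec, Matrix.mul_nonsing_inv _ J.isUnit_det_g,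
    Matrix.one_mulVec]

theorem g_mul_dginv (m : Fin n) : J.g * J.dginv m = -(J.dg m * J.g⁻¹) := by
  rw [dginv, Matrix.mul_neg, ← Matrix.mul_assoc, ← Matrix.mul_assoc,
    Matrix.mul_nonsing_inv _ J.isUnit_det_g, Matrix.one_mul]

theorem g_mulVec_dChristoffel (m a b : Fin n) :
    J.g *ᵥ (fun c => J.dChristoffel m c a b)
      = -(J.dg m *ᵥ fun c => J.christoffel c a b) + J.dChristoffelFirst m a b := by
  rw [dChristoffel_eq_mulVec, Matrix.mulVec_add, Matrix.mulVec_mulVec, Matrix.mulVec_mulVec,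
    g_mul_dginv, Matrix.mul_nonsing_inv _ J.isUnit_det_g, Matrix.one_mulVec, Matrix.neg_mulVec,
    ← Matrix.mulVec_mulVec, christoffel_eq_mulVec]

theorem dg_eq_sum_christoffel (m a b : Fin n) :
    J.dg m a b = ∑ c, (J.g a c * J.christoffel c m b + J.g b c * J.christoffel c m a) := by
  have h := congrFun (J.g_mulVec_christoffel m b) a
  have h' := congrFun (J.g_mulVec_christoffel m a) b
  simp only [Matrix.mulVec, dotProduct, christoffelFirst] at h h'
  rw [sum_add_distrib, h, h', (J.isSymm_dg m).apply a b]
  ring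

theorem sum_g_mul_dChristoffel (m k a b : Fin n) :
    ∑ p, J.g k p * J.dChristoffel m p a b
      = -∑ q, J.dg m k q * J.christoffel q a b + J.dChristoffelFirst m a b k :=
  congrFun (J.g_mulVec_dChristoffel m a b) k

def contract (T : Fin n → Fin n → ℝ) : ℝ := ∑ a, ∑ b, J.g⁻¹ a b * T a b

theorem contract_add (S T : Fin n → Fin n → ℝ) :
    J.contract (fun a b => S a b + T a b) = J.contract S + J.contract T := by
  simp only [contract, mul_add, sum_add_distrib]

theorem contract_neg (T : Fin n → Fin n → ℝ) :
    J.contract (fun a b => -T a b) = -J.contract T := by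
  simp only [contract, mul_neg, sum_neg_distrib]

theorem contract_transpose (T : Fin n → Fin n → ℝ) :
    J.contract (fun a b => T b a) = J.contract T := by
  simp only [contract]
  rw [sum_comm]
  simp_rw [J.inv_apply_comm]

theorem contract_half_add_sub (X Y Z : Fin n → Fin n → ℝ) :
    J.contract (fun a b => (1 / 2) * (X a b + Y a b - Z a b))
      = (1 / 2) * (J.contract X + J.contract Y - J.contract Z) := by
  simp only [contract, mul_sum, ← sum_add_distrib, ← sum_sub_distrib]
  exact sum_congr rfl fun a _ => sum_congr rfl fun b _ => by ring

theorem contract_sum_mul_christoffel (hΓ : ∀ c, J.contractedChristoffel c = 0)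
    (v : Fin n → ℝ) : J.contract (fun a b => ∑ q, v q * J.christoffel q a b) = 0 := by
  calc J.contract (fun a b => ∑ q, v q * J.christoffel q a b)
      = ∑ q, v q * J.contractedChristoffel q := by
        simp only [contract, contractedChristoffel, mul_sum]
        rw [sum_comm_cycle]
        exact sum_congr rfl fun q _ => sum_congr rfl fun a _ => sum_congr rfl fun b _ => by ring
    _ = 0 := by simp [hΓ]

theorem contract_dChristoffel (hdΓ : ∀ m c, J.dContractedChristoffel m c = 0) (m c : Fin n) :
    J.contract (J.dChristoffel m c) = -∑ a, ∑ b, J.dginv m a b * J.christoffel c a b := by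
  have h := hdΓ m c
  simp only [dContractedChristoffel, sum_add_distrib] at h
  rw [contract]
  linarith

theorem sum_sum_dginv_mul_christoffel (m c : Fin n) :
    ∑ r, ∑ s, J.dginv m r s * J.christoffel c r s
      = -∑ p, ∑ q, ∑ r, ∑ s, J.christoffel c r s * J.g⁻¹ p r * J.g⁻¹ q s * J.dg m p q := by
  simp only [dginv, Matrix.neg_apply, Matrix.mul_apply, neg_mul, sum_neg_distrib, sum_mul]
  congr 1
  symm
  rw [sum_comm_cycle]
  refine sum_congr rfl fun r _ => ?_
  rw [sum_comm_cycle]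
  refine sum_congr rfl fun s _ => ?_
  rw [sum_comm]
  refine sum_congr rfl fun p _ => sum_congr rfl fun q _ => ?_
  rw [J.inv_apply_comm q r]
  ring

theorem contract_lower_dChristoffel_eq_ddg (hΓ : ∀ c, J.contractedChristoffel c = 0)
    (i k : Fin n) :
    J.contract (fun a b => ∑ p, J.g k p * J.dChristoffel i p a b)
      = J.contract (fun a b => J.ddg i a b k)
        - (1 / 2) * J.contract (fun a b => J.ddg i k a b) := by
  simp only [sum_g_mul_dChristoffel, contract_add, contract_neg,
    J.contract_sum_mul_christoffel hΓ, neg_zero, zero_add, dChristoffelFirst]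
  refine (J.contract_half_add_sub _ _ _).trans ?_
  rw [show J.contract (fun a b => J.ddg i b a k) = J.contract (fun a b => J.ddg i a b k) from
    J.contract_transpose _]
  ring

theorem contract_lower_dChristoffel_eq_dg (hdΓ : ∀ m c, J.dContractedChristoffel m c = 0)
    (i k : Fin n) :
    J.contract (fun a b => ∑ p, J.g k p * J.dChristoffel i p a b)
      = ∑ a, ∑ p, ∑ q, ∑ r, ∑ s,
          J.g k a * J.christoffel a r s * J.g⁻¹ p r * J.g⁻¹ q s * J.dg i p q := by
  calc J.contract (fun a b => ∑ p, J.g k p * J.dChristoffel i p a b)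
      = ∑ p, J.g k p * J.contract (J.dChristoffel i p) := by
        simp only [contract, mul_sum]
        rw [sum_comm_cycle]
        exact sum_congr rfl fun p _ => sum_congr rfl fun a _ => sum_congr rfl fun b _ => by ring
    _ = _ := by
        simp only [J.contract_dChristoffel hdΓ, sum_sum_dginv_mul_christoffel, neg_neg, mul_sum]
        exact sum_congr rfl fun a _ => sum_congr rfl fun p _ => sum_congr rfl fun q _ =>
          sum_congr rfl fun r _ => sum_congr rfl fun s _ => by ring

theorem contract_lower_dChristoffel_swap (i k : Fin n) :
    J.contract (fun a b => ∑ p, J.g k p * J.dChristoffel a p i b)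
      = -J.contract (fun a b => ∑ q, J.dg a k q * J.christoffel q i b)
        + (1 / 2) * (J.contract (fun a b => J.ddg i a b k) + J.contract (fun a b => J.ddg a b i k)
          - J.contract (fun a b => J.ddg k a b i)) := by
  simp only [sum_g_mul_dChristoffel, contract_add, contract_neg]
  congr 1
  simp only [dChristoffelFirst, J.ddg_comm _ i, J.ddg_comm _ k, (J.isSymm_ddg k _).apply i]
  exact J.contract_half_add_sub _ _ _

theorem contract_dg_mul_christoffel (i k : Fin n) :
    J.contract (fun a b => ∑ q, J.dg a k q * J.christoffel q i b)
      = J.contract (fun a b => ∑ p, J.g k p * ∑ q, J.christoffel p a q * J.christoffel q i b)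
        + ∑ a, ∑ b, ∑ p, ∑ q,
            J.g⁻¹ a b * J.g p q * J.christoffel p i a * J.christoffel q k b := by
  simp only [contract, dg_eq_sum_christoffel, sum_mul, add_mul, sum_add_distrib, mul_add]
  congr 1
  · refine sum_congr rfl fun a _ => sum_congr rfl fun b _ => ?_
    rw [sum_comm]
    simp only [mul_sum, mul_assoc]
  · rw [← contract, ← J.contract_transpose, contract]
    simp only [mul_sum]
    refine sum_congr rfl fun a _ => sum_congr rfl fun b _ => sum_congr rfl fun p _ =>
      sum_congr rfl fun q _ => ?_
    rw [J.christoffel_comm q b k]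
    ring

theorem ricci_eq (hΓ : ∀ c, J.contractedChristoffel c = 0) (i k : Fin n) :
    J.ricci i k
      = J.contract (fun a b => ∑ p, J.g k p * J.dChristoffel i p a b)
        - J.contract (fun a b => ∑ p, J.g k p * J.dChristoffel a p i b)
        - J.contract fun a b => ∑ p, J.g k p * ∑ q, J.christoffel p a q * J.christoffel q i b := by
  have hquad :
      J.contract (fun a b => ∑ p, J.g k p * ∑ q, J.christoffel p i q * J.christoffel q a b)
        = 0 := by
    rw [← J.contract_sum_mul_christoffel hΓ fun q => ∑ p, J.g k p * J.christoffel p i q]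
    refine sum_congr rfl fun a _ => sum_congr rfl fun b _ => ?_
    simp only [mul_sum, sum_mul, mul_assoc]
    rw [sum_comm]
  simp only [contract] at hquad ⊢
  simp only [ricci, mul_add, mul_sub, sum_add_distrib, sum_sub_distrib]
  rw [hquad]
  ring

theorem neg_two_mul_ricci (hΓ : ∀ c, J.contractedChristoffel c = 0)
    (hdΓ : ∀ m c, J.dContractedChristoffel m c = 0) (i k : Fin n) :
    -2 * J.ricci i k = J.contract (fun a b => J.ddg a b i k) + J.htilde i k := by
  have hK : J.contract (fun a b => J.ddg i k a b) = J.contract (fun a b => J.ddg k i a b) := by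
    rw [J.ddg_comm]
  rw [J.ricci_eq hΓ, htilde]
  linarith [J.contract_lower_dChristoffel_eq_ddg hΓ i k,
    J.contract_lower_dChristoffel_eq_ddg hΓ k i, J.contract_lower_dChristoffel_eq_dg hdΓ i k,
    J.contract_lower_dChristoffel_eq_dg hdΓ k i, J.contract_lower_dChristoffel_swap i k,
    J.contract_dg_mul_christoffel i k, hK]

end MetricJet

def metricJetAt {n : ℕ} (G : (Fin n → ℝ) → Matrix (Fin n) (Fin n) ℝ)
    (hG : ∀ a b, ContDiff ℝ 2 fun y => G y a b) (x : Fin n → ℝ)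
    (hsymm : ∀ᶠ y in 𝓝 x, (G y).IsSymm) (hdet : IsUnit (G x).det) : MetricJet n where
  g := G x
  dg m := pdMatrix m G x
  ddg m l := pdMatrix m (pdMatrix l G) x
  isSymm_g := hsymm.self_of_nhds
  isUnit_det_g := hdet
  isSymm_dg m := isSymm_pdMatrix m hsymm
  isSymm_ddg m l := isSymm_pdMatrix m (hsymm.eventually_nhds.mono fun _ hy => isSymm_pdMatrix l hy)
  ddg_comm m l := by
    ext a b
    exact pd_pd_comm (hG a b) m l

section MetricJetAt

variable {n : ℕ} {G : (Fin n → ℝ) → Matrix (Fin n) (Fin n) ℝ} {x : Fin n → ℝ}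

theorem differentiableAt_chris_s13 (hG : ∀ a b, ContDiff ℝ 2 fun y => G y a b)
    (hx : IsUnit (G x).det) (c a b : Fin n) : DifferentiableAt ℝ (chris G c a b) x := by
  have hinv := differentiableAt_inv_apply (fun a b => (hG a b).of_le one_le_two) hx
  have hdg m a b := differentiable_pd m (hG a b) x
  exact (DifferentiableAt.fun_sum fun l _ =>
    (hinv c l).fun_mul (((hdg a b l).fun_add (hdg b a l)).fun_sub (hdg l a b))).const_mul _

variable (hG : ∀ a b, ContDiff ℝ 2 fun y => G y a b) (hsymm : ∀ᶠ y in 𝓝 x, (G y).IsSymm)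
  (hdet : ∀ᶠ y in 𝓝 x, IsUnit (G y).det)

theorem pd_inv_apply (m a b : Fin n) :
    pd m (fun y => (G y)⁻¹ a b) x = (metricJetAt G hG x hsymm hdet.self_of_nhds).dginv m a b :=
  congrFun (congrFun (pdMatrix_inv m (fun a b => (hG a b).of_le one_le_two) hdet) a) b

theorem pd_chris (m c a b : Fin n) :
    pd m (chris G c a b) x = (metricJetAt G hG x hsymm hdet.self_of_nhds).dChristoffel m c a b := by
  have hinv := differentiableAt_inv_apply (fun a b => (hG a b).of_le one_le_two)
    hdet.self_of_nhds
  have hdg m a b := differentiable_pd m (hG a b) x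
  have hsum l := ((hdg a b l).fun_add (hdg b a l)).fun_sub (hdg l a b)
  unfold chris
  rw [pd_const_mul _ _ (DifferentiableAt.fun_sum fun l _ => (hinv c l).fun_mul (hsum l)),
    pd_sum _ _ fun l _ => (hinv c l).fun_mul (hsum l)]
  refine congrArg _ (sum_congr rfl fun l _ => ?_)
  rw [pd_mul _ (hinv c l) (hsum l), pd_sub _ ((hdg a b l).fun_add (hdg b a l)) (hdg l a b),
    pd_add _ (hdg a b l) (hdg b a l), pd_inv_apply hG hsymm hdet]
  simp only [metricJetAt, pdMatrix, Matrix.of_apply]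
  ring

theorem ricci_eq_metricJetAt_ricci (i k : Fin n) :
    ricci G i k x = (metricJetAt G hG x hsymm hdet.self_of_nhds).ricci i k := by
  simp only [ricci, riem, riemUp, pd_chris hG hsymm hdet]
  rfl

theorem pd_contractedChris (m c : Fin n) :
    pd m (contractedChris G c) x
      = (metricJetAt G hG x hsymm hdet.self_of_nhds).dContractedChristoffel m c := by
  have hinv := differentiableAt_inv_apply (fun a b => (hG a b).of_le one_le_two)
    hdet.self_of_nhds
  have hchris := differentiableAt_chris_s13 hG hdet.self_of_nhds c
  unfold contractedChris
  rw [pd_sum _ _ fun p _ => DifferentiableAt.fun_sum fun q _ => (hinv p q).fun_mul (hchris p q)]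
  refine sum_congr rfl fun p _ => ?_
  rw [pd_sum _ _ fun q _ => (hinv p q).fun_mul (hchris p q)]
  refine sum_congr rfl fun q _ => ?_
  rw [pd_mul _ (hinv p q) (hchris p q), pd_chris hG hsymm hdet, pd_inv_apply hG hsymm hdet]
  exact add_comm _ _

end MetricJetAt

theorem neg_two_mul_ricci_of_contractedChris_eq_zero {n : ℕ}
    {G : (Fin n → ℝ) → Matrix (Fin n) (Fin n) ℝ} {x : Fin n → ℝ}
    (hG : ∀ a b, ContDiff ℝ 2 fun y => G y a b) (hsymm : ∀ᶠ y in 𝓝 x, (G y).IsSymm)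
    (hdet : ∀ᶠ y in 𝓝 x, IsUnit (G y).det)
    (hharm : ∀ᶠ y in 𝓝 x, ∀ c, contractedChris G c y = 0) (i k : Fin n) :
    -2 * ricci G i k x
      = ∑ a, ∑ b, (G x)⁻¹ a b * pd a (fun y => pd b (fun w => G w i k) y) x + Htilde G i k x := by
  have hdΓ m c : (metricJetAt G hG x hsymm hdet.self_of_nhds).dContractedChristoffel m c = 0 := by
    rw [← pd_contractedChris hG hsymm hdet]
    exact pd_eq_zero_of_eventuallyEq_const m (hharm.mono fun _ hy => hy c)
  have hΓ c : (metricJetAt G hG x hsymm hdet.self_of_nhds).contractedChristoffel c = 0 :=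
    hharm.self_of_nhds c
  rw [ricci_eq_metricJetAt_ricci hG hsymm hdet, MetricJet.neg_two_mul_ricci _ hΓ hdΓ]
  rfl

theorem hgf_in_elliptic_coordinates_general (n : ℕ)
    (U : Set (Fin n → ℝ)) (hU : IsOpen U)
    (g : ℝ → (Fin n → ℝ) → Matrix (Fin n) (Fin n) ℝ)
    (hsmooth : ∀ i j, ContDiff ℝ (⊤ : ℕ∞) (fun q : ℝ × (Fin n → ℝ) => g q.1 q.2 i j))
    (hmetric : ∀ t : ℝ, ∀ x ∈ U, (g t x).PosDef)
    (helliptic : ∀ t : ℝ, ∀ x ∈ U, ∀ k : Fin n, contractedChris (g t) k x = 0) :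
    (∀ t : ℝ, ∀ x ∈ U, ∀ i j : Fin n,
      -2 * ricci (g t) i j x =
        (∑ k, ∑ l, (g t x)⁻¹ k l * pd k (fun y => pd l (fun w => g t w i j) y) x)
          + Htilde (g t) i j x) ∧
    ((∀ t : ℝ, ∀ x ∈ U, ∀ i j : Fin n,
        deriv (fun s => deriv (fun r => g r x i j) s) t = -2 * ricci (g t) i j x) ↔
      (∀ t : ℝ, ∀ x ∈ U, ∀ i j : Fin n,
        deriv (fun s => deriv (fun r => g r x i j) s) t =
          (∑ k, ∑ l, (g t x)⁻¹ k l * pd k (fun y => pd l (fun w => g t w i j) y) x)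
            + Htilde (g t) i j x)) := by
  have hricci : ∀ t : ℝ, ∀ x ∈ U, ∀ i j : Fin n,
      -2 * ricci (g t) i j x =
        (∑ k, ∑ l, (g t x)⁻¹ k l * pd k (fun y => pd l (fun w => g t w i j) y) x)
          + Htilde (g t) i j x := by
    intro t x hx i j
    have hG a b : ContDiff ℝ 2 fun y => g t y a b :=
      ((hsmooth a b).comp (contDiff_const.prodMk contDiff_id)).of_le (by norm_cast)
    have hpos : ∀ᶠ y in 𝓝 x, (g t y).PosDef := eventually_of_mem (hU.mem_nhds hx) (hmetric t)
    exact neg_two_mul_ricci_of_contractedChris_eq_zero hG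
      (hpos.mono fun _ hy => Matrix.isHermitian_iff_isSymm.mp hy.isHermitian)
      (hpos.mono fun _ hy => hy.det_pos.ne'.isUnit)
      (eventually_of_mem (hU.mem_nhds hx) (helliptic t)) i j
  refine ⟨hricci, forall_congr' fun t => forall₂_congr fun x hx => forall₂_congr fun i j => ?_⟩
  rw [hricci t x hx i j]

/-- **Hyperbolic geometric flow in elliptic coordinates** (equations (3.6)–(3.7)):
if the contracted Christoffel symbols vanish identically, then
`-2 R_{ij} = g^{kl} ∂²g_{ij}/∂x^k∂x^l + H̃_{ij}`, and consequently the hyperbolic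
geometric flow is equivalent to the strictly hyperbolic system
`∂²g_{ij}/∂t² = g^{kl} ∂²g_{ij}/∂x^k∂x^l + H̃_{ij}`. -/
theorem hgf_in_elliptic_coordinates (n : ℕ) (hn : 2 ≤ n)
    (U : Set (Fin n → ℝ)) (hU : IsOpen U)
    (g : ℝ → (Fin n → ℝ) → Matrix (Fin n) (Fin n) ℝ)
    (hsmooth : ∀ i j, ContDiff ℝ (⊤ : ℕ∞) (fun q : ℝ × (Fin n → ℝ) => g q.1 q.2 i j))
    (hmetric : ∀ t : ℝ, ∀ x ∈ U, (g t x).PosDef)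
    (helliptic : ∀ t : ℝ, ∀ x ∈ U, ∀ k : Fin n, contractedChris (g t) k x = 0) :
    (∀ t : ℝ, ∀ x ∈ U, ∀ i j : Fin n,
      -2 * ricci (g t) i j x =
        (∑ k, ∑ l, (g t x)⁻¹ k l * pd k (fun y => pd l (fun w => g t w i j) y) x)
          + Htilde (g t) i j x) ∧
    ((∀ t : ℝ, ∀ x ∈ U, ∀ i j : Fin n,
        deriv (fun s => deriv (fun r => g r x i j) s) t = -2 * ricci (g t) i j x) ↔
      (∀ t : ℝ, ∀ x ∈ U, ∀ i j : Fin n,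
        deriv (fun s => deriv (fun r => g r x i j) s) t =
          (∑ k, ∑ l, (g t x)⁻¹ k l * pd k (fun y => pd l (fun w => g t w i j) y) x)
            + Htilde (g t) i j x)) :=
  hgf_in_elliptic_coordinates_general n U hU g hsmooth hmetric helliptic
end
end
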